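/- Let G be a totally disconnected locally compact group, φ : G → G a topological automorphism, N a closed normal subgroup with φ(N) = N, q : G → G/N the projection, and φ̄ : G/N → G/N the induced automorphism. Then C(φ̄, q(U)) = q(C(φ,U)) for every open compact subgroup U of G containing N, and h_top(φ) ≥ h_top(φ̄). -/

import Mathlib

open Filter Topology

variable {G : Type*} [Group G]

/-- The `n`-th `φ`-cotrajectory `Cₙ(φ,U) = ⋂_{i<n} φ^{-i}(U)`. -/
def cotrajN (φ : MulAut G) (U : Subgroup G) (n : ℕ) : Subgroup G :=
  ⨅ i ∈ Finset.range n, Subgroup.comap (φ ^ i).toMonoidHom U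

/-- `cₙ = [U : Cₙ(φ,U)]`. -/
noncomputable def entIdx (φ : MulAut G) (U : Subgroup G) (n : ℕ) : ℕ :=
  (cotrajN φ U n).relIndex U

/-- The topological entropy of `φ` with respect to `U`,
`H_top(φ,U) = lim_n log cₙ / n` (the limit exists, so it equals the `limsup`). -/
noncomputable def Htop (φ : MulAut G) (U : Subgroup G) : ℝ :=
  limsup (fun n : ℕ => Real.log (entIdx φ U n) / n) atTop

/-- The `φ`-cotrajectory `C(φ,U) = ⋂_{n≥0} φ^{-n}(U)`. -/
def cotraj (φ : MulAut G) (U : Subgroup G) : Subgroup G :=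
  ⨅ n : ℕ, Subgroup.comap (φ ^ n).toMonoidHom U

/-- The topological entropy `h_top(φ) = sup {H_top(φ,U) : U open compact subgroup}`. -/
noncomputable def htop [TopologicalSpace G] (φ : MulAut G) : EReal :=
  ⨆ (U : Subgroup G) (_ : IsOpen (U : Set G) ∧ IsCompact (U : Set G)), ((Htop φ U : ℝ) : EReal)

/-! Since `q ∘ φ = φ̄ ∘ q`, pulling back along `q` commutes with forming (finite) cotrajectories.
As `q⁻¹(q U) = U N = U` when `N ≤ U`, this gives the formula for `C(φ̄, q U)`.

For the entropy, given an open compact subgroup `V` of `G/N`, van Dantzig's theorem provides an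
open compact subgroup `U` of `G` with `q U ≤ V`. Then `q Cₙ(φ,U) ≤ Cₙ(φ̄,q U)`, so
`[q U : Cₙ(φ̄,q U)] ≤ [U : Cₙ(φ,U)]`, and enlarging `q U` to `V` costs at most the constant factor
`[V : q U]`, which disappears in `log cₙ / n`. The bound `cₙ(φ,U) ≤ [U : U ∩ φ⁻¹U]ⁿ` keeps
`log cₙ / n` bounded, so the real `limsup`s compared are not junk values. -/

section Cotrajectory

variable {H : Type*} [Group H]

lemma MulAut.coe_pow (ψ : MulAut G) (n : ℕ) : ⇑(ψ ^ n) = (⇑ψ)^[n] := by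
  induction n with
  | zero => rfl
  | succ n ih => rw [pow_succ', Function.iterate_succ', ← ih]; rfl

lemma cotrajN_mono (ψ : MulAut G) {U V : Subgroup G} (hUV : U ≤ V) (n : ℕ) :
    cotrajN ψ U n ≤ cotrajN ψ V n :=
  iInf₂_mono fun _ _ ↦ Subgroup.comap_mono hUV

lemma cotrajN_succ (ψ : MulAut G) (U : Subgroup G) (n : ℕ) :
    cotrajN ψ U (n + 1) = U ⊓ (cotrajN ψ U n).comap ψ.toMonoidHom := by
  ext g
  simp only [cotrajN, Subgroup.mem_inf, Subgroup.mem_comap, Subgroup.mem_iInf, Finset.mem_range,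
    Nat.forall_lt_succ_left, pow_zero, pow_succ, MulAut.mul_apply, MulEquiv.coe_toMonoidHom,
    MulAut.one_apply]

lemma cotrajN_succ_le (ψ : MulAut G) (U : Subgroup G) (n : ℕ) :
    cotrajN ψ U (n + 1) ≤ cotrajN ψ U n :=
  iInf₂_mono' fun i hi ↦ ⟨i, Finset.range_mono n.le_succ hi, le_rfl⟩

lemma mulAut_pow_apply_of_semiconj (f : G →* H) {ψ : MulAut G} {ψ' : MulAut H}
    (hf : ∀ g, ψ' (f g) = f (ψ g)) (n : ℕ) (g : G) : (ψ' ^ n) (f g) = f ((ψ ^ n) g) := by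
  rw [MulAut.coe_pow, MulAut.coe_pow]
  exact ((Function.Semiconj.iterate_right (fun g ↦ (hf g).symm) n) g).symm

lemma comap_comap_mulAut_pow_of_semiconj (f : G →* H) {ψ : MulAut G} {ψ' : MulAut H}
    (hf : ∀ g, ψ' (f g) = f (ψ g)) (V : Subgroup H) (n : ℕ) :
    ((V.comap (ψ' ^ n).toMonoidHom).comap f) = (V.comap f).comap (ψ ^ n).toMonoidHom := by
  ext g
  simp only [Subgroup.mem_comap, MulEquiv.coe_toMonoidHom, mulAut_pow_apply_of_semiconj f hf]

lemma comap_cotrajN_of_semiconj (f : G →* H) {ψ : MulAut G} {ψ' : MulAut H}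
    (hf : ∀ g, ψ' (f g) = f (ψ g)) (V : Subgroup H) (n : ℕ) :
    (cotrajN ψ' V n).comap f = cotrajN ψ (V.comap f) n := by
  simp only [cotrajN, Subgroup.comap_iInf, comap_comap_mulAut_pow_of_semiconj f hf]

lemma comap_cotraj_of_semiconj (f : G →* H) {ψ : MulAut G} {ψ' : MulAut H}
    (hf : ∀ g, ψ' (f g) = f (ψ g)) (V : Subgroup H) :
    (cotraj ψ' V).comap f = cotraj ψ (V.comap f) := by
  simp only [cotraj, Subgroup.comap_iInf, comap_comap_mulAut_pow_of_semiconj f hf]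

lemma cotraj_map_of_semiconj {f : G →* H} (hf_surj : Function.Surjective f) {ψ : MulAut G}
    {ψ' : MulAut H} (hf : ∀ g, ψ' (f g) = f (ψ g)) {U : Subgroup G} (hU : f.ker ≤ U) :
    cotraj ψ' (U.map f) = (cotraj ψ U).map f := by
  rw [← Subgroup.map_comap_eq_self_of_surjective hf_surj (cotraj ψ' _),
    comap_cotraj_of_semiconj f hf, Subgroup.comap_map_eq, sup_eq_left.mpr hU]

lemma map_cotrajN_le_of_semiconj (f : G →* H) {ψ : MulAut G} {ψ' : MulAut H}
    (hf : ∀ g, ψ' (f g) = f (ψ g)) (U : Subgroup G) (n : ℕ) :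
    (cotrajN ψ U n).map f ≤ cotrajN ψ' (U.map f) n := by
  rw [Subgroup.map_le_iff_le_comap, comap_cotrajN_of_semiconj f hf]
  exact cotrajN_mono ψ (Subgroup.le_comap_map f U) n

end Cotrajectory

lemma entIdx_succ_le (ψ : MulAut G) (U : Subgroup G)
    (hU : (U.comap ψ.toMonoidHom).relIndex U ≠ 0) (n : ℕ) :
    entIdx ψ U (n + 1) ≤ (U.comap ψ.toMonoidHom).relIndex U * entIdx ψ U n := by
  by_cases hn : entIdx ψ U n = 0
  · rw [hn, mul_zero, entIdx, Subgroup.relIndex_eq_zero_of_le_left (cotrajN_succ_le ψ U n) hn]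
  set X := (cotrajN ψ U n).comap ψ.toMonoidHom
  set Y := U.comap ψ.toMonoidHom
  have hXY : X.relIndex Y = entIdx ψ U n := by
    rw [Subgroup.relIndex_comap, Subgroup.map_comap_eq_self_of_surjective ψ.surjective, entIdx]
  have hXYU : X.relIndex (Y ⊓ U) * Y.relIndex U = (X ⊓ Y).relIndex U :=
    Subgroup.relIndex_inf_mul_relIndex X Y U
  have hXYU_ne : (X ⊓ Y).relIndex U ≠ 0 := by
    rw [← hXYU]
    refine mul_ne_zero (fun h ↦ ?_) hU
    exact hn (hXY ▸ Subgroup.relIndex_eq_zero_of_le_right inf_le_left h)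
  calc entIdx ψ U (n + 1) = X.relIndex U := by
        rw [entIdx, cotrajN_succ, Subgroup.inf_relIndex_left]
    _ ≤ (X ⊓ Y).relIndex U := Subgroup.relIndex_le_of_le_left inf_le_left hXYU_ne
    _ = X.relIndex (Y ⊓ U) * Y.relIndex U := hXYU.symm
    _ ≤ X.relIndex Y * Y.relIndex U := by
        gcongr
        exact Subgroup.relIndex_le_of_le_right inf_le_left (hXY ▸ hn)
    _ = Y.relIndex U * entIdx ψ U n := by rw [hXY, mul_comm]

lemma entIdx_le_pow (ψ : MulAut G) (U : Subgroup G)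
    (hU : (U.comap ψ.toMonoidHom).relIndex U ≠ 0) (n : ℕ) :
    entIdx ψ U n ≤ (U.comap ψ.toMonoidHom).relIndex U ^ n := by
  induction n with
  | zero => simp [entIdx, cotrajN]
  | succ n ih =>
    calc entIdx ψ U (n + 1) ≤ (U.comap ψ.toMonoidHom).relIndex U * entIdx ψ U n :=
          entIdx_succ_le ψ U hU n
      _ ≤ (U.comap ψ.toMonoidHom).relIndex U ^ (n + 1) := by
          rw [pow_succ']
          exact Nat.mul_le_mul_left _ ih

lemma entIdx_le_relIndex_mul (ψ : MulAut G) {V W : Subgroup G} (hVW : V ≤ W) (n : ℕ)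
    (hV : entIdx ψ V n ≠ 0) (hVW' : V.relIndex W ≠ 0) :
    entIdx ψ W n ≤ V.relIndex W * entIdx ψ V n := by
  have hprod : (cotrajN ψ V n ⊓ V).relIndex W = entIdx ψ V n * V.relIndex W := by
    rw [← Subgroup.relIndex_inf_mul_relIndex, inf_eq_left.mpr hVW, entIdx]
  calc entIdx ψ W n ≤ (cotrajN ψ V n ⊓ V).relIndex W :=
        Subgroup.relIndex_le_of_le_left (inf_le_left.trans (cotrajN_mono ψ hVW n))
          (hprod ▸ mul_ne_zero hV hVW')
    _ = V.relIndex W * entIdx ψ V n := by rw [hprod, mul_comm]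

lemma entIdx_map_le {H : Type*} [Group H] (f : G →* H) {ψ : MulAut G} {ψ' : MulAut H}
    (hf : ∀ g, ψ' (f g) = f (ψ g)) (U : Subgroup G) (n : ℕ) (hU : entIdx ψ U n ≠ 0) :
    entIdx ψ' (U.map f) n ≤ entIdx ψ U n := by
  set C := cotrajN ψ U n
  have hmap : (C.map f).relIndex (U.map f) = (C ⊔ f.ker).relIndex U := by
    rw [← Subgroup.relIndex_comap, Subgroup.comap_map_eq]
  have hsup : (C ⊔ f.ker).relIndex U ≤ C.relIndex U :=
    Subgroup.relIndex_le_of_le_left le_sup_left hU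
  calc entIdx ψ' (U.map f) n ≤ (C.map f).relIndex (U.map f) :=
        Subgroup.relIndex_le_of_le_left (map_cotrajN_le_of_semiconj f hf U n)
          (hmap ▸ fun h ↦ hU (Subgroup.relIndex_eq_zero_of_le_left le_sup_left h))
    _ ≤ entIdx ψ U n := hmap ▸ hsup

lemma limsup_log_div_le_of_le_mul {a b : ℕ → ℕ} {m : ℕ} (ha : ∀ n, a n ≠ 0)
    (hab : ∀ n, a n ≤ m * b n)
    (hb : IsBoundedUnder (· ≤ ·) atTop fun n ↦ Real.log (b n) / n) :
    limsup (fun n ↦ Real.log (a n) / n) atTop ≤ limsup (fun n ↦ Real.log (b n) / n) atTop := by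
  have log_div_nonneg (c : ℕ → ℕ) (n : ℕ) : 0 ≤ Real.log (c n) / n :=
    div_nonneg (Real.log_natCast_nonneg _) n.cast_nonneg
  have hm : Tendsto (fun n : ℕ ↦ Real.log m / n) atTop (𝓝 0) :=
    tendsto_const_div_atTop_nhds_zero_nat _
  have hbm : IsBoundedUnder (· ≤ ·) atTop fun n ↦ Real.log (b n) / n + Real.log m / n :=
    isBoundedUnder_le_add hb hm.isBoundedUnder_le
  have hpointwise (n : ℕ) : Real.log (a n) / n ≤ Real.log (b n) / n + Real.log m / n := by
    have ha' : (0 : ℝ) < a n := by exact_mod_cast Nat.pos_of_ne_zero (ha n)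
    have hmb : m ≠ 0 ∧ b n ≠ 0 := by
      simpa using (Nat.pos_of_ne_zero (ha n)).trans_le (hab n) |>.ne'
    rw [← add_div]
    gcongr
    calc Real.log (a n) ≤ Real.log ((m : ℝ) * b n) :=
          Real.log_le_log ha' (by exact_mod_cast hab n)
      _ = Real.log (b n) + Real.log m := by
          rw [Real.log_mul (by exact_mod_cast hmb.1) (by exact_mod_cast hmb.2), add_comm]
  calc limsup (fun n ↦ Real.log (a n) / n) atTop
      ≤ limsup (fun n ↦ Real.log (b n) / n + Real.log m / n) atTop :=
        limsup_le_limsup (Eventually.of_forall hpointwise)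
          (isBoundedUnder_of ⟨0, log_div_nonneg a⟩).isCoboundedUnder_le hbm
    _ ≤ limsup (fun n ↦ Real.log (b n) / n) atTop + limsup (fun n : ℕ ↦ Real.log m / n) atTop :=
        limsup_add_le (isBoundedUnder_of ⟨0, log_div_nonneg b⟩) hb
          hm.isCoboundedUnder_le hm.isBoundedUnder_le
    _ = limsup (fun n ↦ Real.log (b n) / n) atTop := by rw [hm.limsup_eq, add_zero]

section Topological

variable [TopologicalSpace G]

lemma isOpen_cotrajN {ψ : MulAut G} (hψ : Continuous ψ) {U : Subgroup G}
    (hU : IsOpen (U : Set G)) (n : ℕ) : IsOpen (cotrajN ψ U n : Set G) := by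
  have hpow (i : ℕ) : Continuous (ψ ^ i) := by
    rw [MulAut.coe_pow]
    exact hψ.iterate i
  simp only [cotrajN, Subgroup.coe_iInf]
  exact isOpen_biInter_finset fun i _ ↦ hU.preimage (hpow i)

variable [IsTopologicalGroup G]

lemma Subgroup.relIndex_ne_zero_of_isOpen_of_isCompact {K U : Subgroup G}
    (hK : IsOpen (K : Set G)) (hU : IsCompact (U : Set G)) : K.relIndex U ≠ 0 := by
  have : CompactSpace U := isCompact_iff_compactSpace.mp hU
  have : Finite (U ⧸ K.subgroupOf U) :=
    Subgroup.quotient_finite_of_isOpen _ (hK.preimage continuous_subtype_val)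
  exact Subgroup.index_ne_zero_of_finite

lemma entIdx_ne_zero {ψ : MulAut G} (hψ : Continuous ψ) {U : Subgroup G}
    (hUo : IsOpen (U : Set G)) (hUc : IsCompact (U : Set G)) (n : ℕ) : entIdx ψ U n ≠ 0 :=
  Subgroup.relIndex_ne_zero_of_isOpen_of_isCompact (isOpen_cotrajN hψ hUo n) hUc

lemma isBoundedUnder_log_entIdx_div {ψ : MulAut G} (hψ : Continuous ψ) {U : Subgroup G}
    (hUo : IsOpen (U : Set G)) (hUc : IsCompact (U : Set G)) :
    IsBoundedUnder (· ≤ ·) atTop fun n : ℕ ↦ Real.log (entIdx ψ U n) / n := by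
  set k := (U.comap ψ.toMonoidHom).relIndex U
  have hk : k ≠ 0 := Subgroup.relIndex_ne_zero_of_isOpen_of_isCompact (hUo.preimage hψ) hUc
  refine isBoundedUnder_of ⟨Real.log k, fun n ↦ ?_⟩
  rcases n.eq_zero_or_pos with rfl | hn
  · simpa using Real.log_natCast_nonneg k
  have hc : (0 : ℝ) < entIdx ψ U n := by
    exact_mod_cast Nat.pos_of_ne_zero (entIdx_ne_zero hψ hUo hUc n)
  rw [div_le_iff₀ (by exact_mod_cast hn), mul_comm, ← Real.log_pow]
  exact Real.log_le_log hc (by exact_mod_cast entIdx_le_pow ψ U hk n)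

lemma Htop_le_of_map_le {H : Type*} [Group H] [TopologicalSpace H] [IsTopologicalGroup H]
    {f : G →* H} (hf_cont : Continuous f) (hf_open : IsOpenMap f) {ψ : MulAut G}
    {ψ' : MulAut H} (hψ : Continuous ψ) (hψ' : Continuous ψ') (hf : ∀ g, ψ' (f g) = f (ψ g))
    {U : Subgroup G} {V : Subgroup H}
    (hUo : IsOpen (U : Set G)) (hUc : IsCompact (U : Set G)) (hVo : IsOpen (V : Set H))
    (hVc : IsCompact (V : Set H)) (hUV : U.map f ≤ V) : Htop ψ' V ≤ Htop ψ U := by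
  have hfUo : IsOpen (U.map f : Set H) := hf_open _ hUo
  refine limsup_log_div_le_of_le_mul (m := (U.map f).relIndex V) (entIdx_ne_zero hψ' hVo hVc)
    (fun n ↦ ?_) (isBoundedUnder_log_entIdx_div hψ hUo hUc)
  calc entIdx ψ' V n ≤ (U.map f).relIndex V * entIdx ψ' (U.map f) n :=
        entIdx_le_relIndex_mul ψ' hUV n
          (Subgroup.relIndex_ne_zero_of_isOpen_of_isCompact (isOpen_cotrajN hψ' hfUo n)
            (hUc.image hf_cont))
          (Subgroup.relIndex_ne_zero_of_isOpen_of_isCompact hfUo hVc)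
    _ ≤ (U.map f).relIndex V * entIdx ψ U n :=
        Nat.mul_le_mul_left _ (entIdx_map_le f hf U n (entIdx_ne_zero hψ hUo hUc n))

variable (G) [LocallyCompactSpace G] [TotallyDisconnectedSpace G] in
open Pointwise in
theorem exists_isOpen_isCompact_subgroup :
    ∃ W : Subgroup G, IsOpen (W : Set G) ∧ IsCompact (W : Set G) := by
  obtain ⟨K, hKc, hK⟩ := exists_compact_mem_nhds (1 : G)
  obtain ⟨V, ⟨hVclosed, hVo⟩, h1V, hVK⟩ :=
    loc_compact_Haus_tot_disc_of_zero_dim.mem_nhds_iff.mp hK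
  have hVc : IsCompact V := hKc.of_isClosed_subset hVclosed hVK
  obtain ⟨T, hT, hTV⟩ := compact_open_separated_mul_left hVc hVo subset_rfl
  -- `T * V ⊆ V` and `1 ∈ V` keep the subgroup generated by `T ∩ T⁻¹` inside `V`.
  have hsub : (Subgroup.closure (T ∩ T⁻¹) : Set G) ⊆ V := fun x hx ↦ by
    induction hx using Subgroup.closure_induction_left with
    | one => exact h1V
    | mul_left t ht y _ hy => exact hTV (Set.mul_mem_mul ht.1 hy)
    | inv_mul_cancel t ht y _ hy => exact hTV (Set.mul_mem_mul ht.2 hy)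
  have hopen : IsOpen (Subgroup.closure (T ∩ T⁻¹) : Set G) :=
    Subgroup.isOpen_of_mem_nhds _ (mem_of_superset (inter_mem hT (inv_mem_nhds_one G hT))
      Subgroup.subset_closure)
  exact ⟨_, hopen, hVc.of_isClosed_subset (Subgroup.isClosed_of_isOpen _ hopen) hsub⟩

end Topological

theorem monotonicity_quotient_general
    [TopologicalSpace G] [IsTopologicalGroup G] [LocallyCompactSpace G] [TotallyDisconnectedSpace G]
    (φ : MulAut G) (hφ : Continuous φ)
    (N : Subgroup G) [N.Normal]
    (φbar : MulAut (G ⧸ N))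
    (hbar : ∀ g : G, φbar (QuotientGroup.mk g) = QuotientGroup.mk (φ g)) :
    (∀ U : Subgroup G, IsOpen (U : Set G) → IsCompact (U : Set G) → N ≤ U →
        cotraj φbar (Subgroup.map (QuotientGroup.mk' N) U) =
          Subgroup.map (QuotientGroup.mk' N) (cotraj φ U)) ∧
      htop φbar ≤ htop φ := by
  have hq_cont : Continuous (QuotientGroup.mk' N) := continuous_quot_mk
  have hbar_cont : Continuous φbar := by
    rw [QuotientGroup.isOpenMap_coe.isQuotientMap hq_cont Quotient.exists_rep |>.continuous_iff]
    exact hq_cont.comp hφ |>.congr fun g ↦ (hbar g).symm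
  refine ⟨fun U _ _ hNU ↦ cotraj_map_of_semiconj (QuotientGroup.mk'_surjective N) hbar
    (by rwa [QuotientGroup.ker_mk']), iSup₂_le fun V ⟨hVo, hVc⟩ ↦ ?_⟩
  obtain ⟨W, hWo, hWc⟩ := exists_isOpen_isCompact_subgroup G
  set U := W ⊓ V.comap (QuotientGroup.mk' N)
  have hUo : IsOpen (U : Set G) := hWo.inter (hVo.preimage hq_cont)
  have hUc : IsCompact (U : Set G) :=
    hWc.of_isClosed_subset (Subgroup.isClosed_of_isOpen U hUo) Set.inter_subset_left
  have hUV : U.map (QuotientGroup.mk' N) ≤ V := Subgroup.map_le_iff_le_comap.mpr inf_le_right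
  calc ((Htop φbar V : ℝ) : EReal)
      ≤ Htop φ U := EReal.coe_le_coe_iff.mpr <| Htop_le_of_map_le hq_cont
        QuotientGroup.isOpenMap_coe hφ hbar_cont hbar hUo hUc hVo hVc hUV
    _ ≤ htop φ := le_iSup₂_of_le U ⟨hUo, hUc⟩ le_rfl

theorem monotonicity_quotient
    [TopologicalSpace G] [IsTopologicalGroup G] [LocallyCompactSpace G] [TotallyDisconnectedSpace G]
    (φ : MulAut G) (hφ : Continuous φ) (hφ' : Continuous φ⁻¹)
    (N : Subgroup G) [N.Normal] (hNc : IsClosed (N : Set G))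
    (hNφ : Subgroup.map φ.toMonoidHom N = N)
    (φbar : MulAut (G ⧸ N))
    (hbar : ∀ g : G, φbar (QuotientGroup.mk g) = QuotientGroup.mk (φ g)) :
    (∀ U : Subgroup G, IsOpen (U : Set G) → IsCompact (U : Set G) → N ≤ U →
        cotraj φbar (Subgroup.map (QuotientGroup.mk' N) U) =
          Subgroup.map (QuotientGroup.mk' N) (cotraj φ U)) ∧
      htop φbar ≤ htop φ :=
  monotonicity_quotient_general φ hφ N φbar hbar
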